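/- Let $\silting$ be a silting collection in a triangulated category $\mathcal{D}$, $t$ its associated silting t-structure, and $w$ the induced weight structure on $\mathcal{C} = \mathrm{thick}(\silting)$ (with $\mathcal{C}_{w\leq 0}$ the Karoubi closure of the extension closure of $\{P[m] : P \in \silting, m \geq 0\}$ and $\mathcal{C}_{w\geq 0}$ of $\{P[m] : P \in \silting, m \leq 0\}$). Then $w$ is w-t-strictly left orthogonal to $t$: $\mathcal{C}_{w\geq 0} = {}^{\perp}(\mathcal{D}^{t<0}) \cap \mathcal{C}$, $\mathcal{C}_{w\leq 0} = {}^{\perp}(\mathcal{D}^{t>0}) \cap \mathcal{C}$, $\mathcal{D}^{t<0} = (\mathcal{C}_{w\geq 0})^{\perp}$, and $\mathcal{D}^{t>0} = (\mathcal{C}_{w\leq 0})^{\perp}$. -/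

import Mathlib

open CategoryTheory Limits Pretriangulated

namespace Paper

universe v u

variable {C : Type u} [Category.{v} C] [Preadditive C] [HasZeroObject C]
  [HasShift C ℤ] [∀ n : ℤ, (shiftFunctor C n).Additive] [Pretriangulated C]

open CategoryTheory.Triangulated

/-- The right perpendicular of a class of objects. -/
def rPerp (T : Set C) : Set C := {Y | ∀ X ∈ T, ∀ f : X ⟶ Y, f = 0}

/-- The left perpendicular of a class of objects. -/
def lPerp (T : Set C) : Set C := {X | ∀ Y ∈ T, ∀ f : X ⟶ Y, f = 0}

/-- `S^{⊥_{>0}}`. -/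
def perpGT (S : Set C) : Set C := {X | ∀ P ∈ S, ∀ m : ℤ, 0 < m → ∀ f : P ⟶ X⟦m⟧, f = 0}

/-- `S^{⊥_{<0}}`. -/
def perpLT (S : Set C) : Set C := {X | ∀ P ∈ S, ∀ m : ℤ, m < 0 → ∀ f : P ⟶ X⟦m⟧, f = 0}

/-- The pair `(S^{⊥_{>0}}, S^{⊥_{<0}})` is the t-structure `t`. -/
def IsSiltingTStructureFor (S : Set C) (t : TStructure C) : Prop :=
  (∀ X : C, t.le 0 X ↔ X ∈ perpGT S) ∧ (∀ X : C, t.ge 0 X ↔ X ∈ perpLT S)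

/-- `X` is a retract (direct summand) of `Y`. -/
def IsRetractOf (X Y : C) : Prop := ∃ (i : X ⟶ Y) (r : Y ⟶ X), i ≫ r = 𝟙 X


/-- An indecomposable object: nonzero, and not a nontrivial biproduct. -/
def IndecObj {A : Type*} [Category A] [Limits.HasZeroMorphisms A]
    [HasBinaryBiproducts A] (X : A) : Prop :=
  ¬ IsZero X ∧ ∀ Y Z : A, Nonempty (X ≅ Y ⊞ Z) → IsZero Y ∨ IsZero Z

section Biprod
variable [HasFiniteBiproducts C]

/-- The Karoubi closure: direct summands of finite coproducts of objects of `S`. -/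
def Kar (S : Set C) : Set C :=
  {X | ∃ (n : ℕ) (f : Fin n → C), (∀ i, f i ∈ S) ∧ IsRetractOf X (⨁ f)}

/-- A class of objects is Krull–Schmidt: every object is a finite biproduct of
objects of the class with local endomorphism rings. -/
def KrullSchmidtOn (T : Set C) : Prop :=
  ∀ X ∈ T, ∃ (n : ℕ) (f : Fin n → C),
    (∀ i, f i ∈ T ∧ IsLocalRing (End (f i))) ∧ Nonempty (X ≅ ⨁ f)

/-- The category `C` is Krull–Schmidt. -/
def IsKrullSchmidt : Prop :=
  ∀ X : C, ∃ (n : ℕ) (f : Fin n → C),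
    (∀ i, IsLocalRing (End (f i))) ∧ Nonempty (X ≅ ⨁ f)

/-- A silting collection: pairwise non-isomorphic indecomposables whose Karoubi
closure is Krull–Schmidt, such that the perpendicular pair is the t-structure `t`. -/
structure IsSiltingCollection (S : Set C) (t : TStructure C) : Prop where
  indec : ∀ P ∈ S, IndecObj P
  pairwise_noniso : ∀ P ∈ S, ∀ Q ∈ S, P ≠ Q → IsEmpty (P ≅ Q)
  kar_ks : KrullSchmidtOn (Kar S)
  tstr : IsSiltingTStructureFor S t

end Biprod

/-- Derived projective objects with respect to a t-structure. -/
def IsDerivedProjective (t : TStructure C) (P : C) : Prop :=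
  t.le 0 P ∧ ∀ (X : C), t.le 0 X → ∀ f : P ⟶ X⟦(1 : ℤ)⟧, f = 0

/-- The heart of a t-structure, as a class of objects. -/
def heartSet (t : TStructure C) : Set C := {X | t.le 0 X ∧ t.ge 0 X}

/-- The heart of a t-structure, as a full subcategory. -/
abbrev Heart (t : TStructure C) := ObjectProperty.FullSubcategory (heartSet t)

instance (t : TStructure C) : Category (Heart t) := ObjectProperty.FullSubcategory.category _

instance (P : C → Prop) : Preadditive (ObjectProperty.FullSubcategory P) where
  homGroup X Y := (InducedCategory.homEquiv (X := X) (Y := Y)).addCommGroup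
  add_comp _ _ _ f f' g := by ext; apply Preadditive.add_comp
  comp_add _ _ _ f g g' := by ext; apply Preadditive.comp_add

/-- Truncation data for a t-structure: the truncation functors `t_{≤0}` (right adjoint
to the inclusion of `D^{t≤0}`), `t_{≥0}` (left adjoint to the inclusion of `D^{t≥0}`),
and the zeroth cohomology functor `H = t_{≤0} ∘ t_{≥0}`. -/
structure TruncationData (t : TStructure C) where
  /-- the zeroth cohomology functor -/
  H : C ⥤ C
  H_heart : ∀ X : C, H.obj X ∈ heartSet t
  τle : C ⥤ C
  τleCounit : τle ⟶ 𝟭 C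
  τle_mem : ∀ X : C, t.le 0 (τle.obj X)
  τle_fac : ∀ (X Z : C), t.le 0 Z → ∀ f : Z ⟶ X,
    ∃! g : Z ⟶ τle.obj X, g ≫ τleCounit.app X = f
  τge : C ⥤ C
  τgeUnit : 𝟭 C ⟶ τge
  τge_mem : ∀ X : C, t.ge 0 (τge.obj X)
  τge_fac : ∀ (X Z : C), t.ge 0 Z → ∀ f : X ⟶ Z,
    ∃! g : τge.obj X ⟶ Z, τgeUnit.app X ≫ g = f
  H_eq : H = τge ⋙ τle

/-- The zeroth cohomology functor, valued in the heart. -/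
def TruncationData.Hh {t : TStructure C} (TD : TruncationData t) : C ⥤ Heart t :=
  ObjectProperty.lift _ TD.H TD.H_heart

/-- A projective cover: an essential epimorphism from a projective object. -/
def IsProjectiveCover {A : Type*} [Category A] {P X : A} (π : P ⟶ X) : Prop :=
  Projective P ∧ Epi π ∧ ∀ (R : A) (g : R ⟶ P), Epi (g ≫ π) → Epi g

/-- A derived projective cover of `X`. -/
def IsDerivedProjectiveCover {t : TStructure C} (TD : TruncationData t)
    {P X : C} (π : P ⟶ X) : Prop :=
  IsDerivedProjective t P ∧ IsProjectiveCover (TD.Hh.map π)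

/-- A t-structure is non-degenerate. -/
def NonDegenerate (t : TStructure C) : Prop :=
  (∀ X : C, (∀ n : ℤ, t.le n X) → IsZero X) ∧ (∀ X : C, (∀ n : ℤ, t.ge n X) → IsZero X)

/-- An object of a category has finite length: bounded chains of subobjects. -/
def FiniteLengthObj {A : Type*} [Category A] (X : A) : Prop :=
  ∃ n : ℕ, ∀ s : Fin (n + 1) → Subobject X, ¬ StrictMono s

/-- `D` has derived projectives: every projective of the heart is `H⁰` of a
derived projective. -/
def HasDerivedProjectives {t : TStructure C} (TD : TruncationData t) : Prop :=
  ∀ Q : Heart t, Projective Q → ∃ P : C, IsDerivedProjective t P ∧ Nonempty (TD.Hh.obj P ≅ Q)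

/-- `D` has enough derived projectives. -/
def HasEnoughDerivedProjectives {t : TStructure C} (TD : TruncationData t) : Prop :=
  EnoughProjectives (Heart t) ∧ HasDerivedProjectives TD

/-- The extension closure of a class of objects. -/
inductive ExtClos (T : Set C) : C → Prop
  | of {X : C} : X ∈ T → ExtClos T X
  | zero {X : C} : IsZero X → ExtClos T X
  | ext {A E B : C} (f : A ⟶ E) (g : E ⟶ B) (h : B ⟶ A⟦(1 : ℤ)⟧) :
      Triangle.mk f g h ∈ (distTriang C) → ExtClos T A → ExtClos T B → ExtClos T E

/-- The Karoubi (retract) closure of a class of objects. -/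
def KarClos (T : Set C) : Set C := {X | ∃ Y ∈ T, IsRetractOf X Y}

/-- The triangulated subcategory generated by a class of objects. -/
inductive TriaClos (T : Set C) : C → Prop
  | of {X : C} : X ∈ T → TriaClos T X
  | zero {X : C} : IsZero X → TriaClos T X
  | shift {X : C} (n : ℤ) : TriaClos T X → TriaClos T (X⟦n⟧)
  | ext {A E B : C} (f : A ⟶ E) (g : E ⟶ B) (h : B ⟶ A⟦(1 : ℤ)⟧) :
      Triangle.mk f g h ∈ (distTriang C) → TriaClos T A → TriaClos T B → TriaClos T E

/-- The thick subcategory generated by a class of objects. -/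
inductive ThickClos (T : Set C) : C → Prop
  | of {X : C} : X ∈ T → ThickClos T X
  | zero {X : C} : IsZero X → ThickClos T X
  | shift {X : C} (n : ℤ) : ThickClos T X → ThickClos T (X⟦n⟧)
  | ext {A E B : C} (f : A ⟶ E) (g : E ⟶ B) (h : B ⟶ A⟦(1 : ℤ)⟧) :
      Triangle.mk f g h ∈ (distTriang C) → ThickClos T A → ThickClos T B → ThickClos T E
  | retract {X Y : C} : IsRetractOf X Y → ThickClos T Y → ThickClos T X

/-- A thick subcategory, as a class of objects. -/
structure IsThickSet (T : Set C) : Prop where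
  zero : ∀ X : C, IsZero X → X ∈ T
  shift : ∀ X ∈ T, ∀ n : ℤ, X⟦n⟧ ∈ T
  ext : ∀ (A E B : C) (f : A ⟶ E) (g : E ⟶ B) (h : B ⟶ A⟦(1 : ℤ)⟧),
    Triangle.mk f g h ∈ (distTriang C) → A ∈ T → B ∈ T → E ∈ T
  retract : ∀ X Y : C, IsRetractOf X Y → Y ∈ T → X ∈ T

/-- A weight structure on the subcategory of `C` given by the class `CC`. -/
structure WeightStructureOn (CC : Set C) where
  le : Set C
  ge : Set C
  le_sub : le ⊆ CC
  ge_sub : ge ⊆ CC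
  le_iso : ∀ X Y : C, (X ≅ Y) → X ∈ le → Y ∈ le
  ge_iso : ∀ X Y : C, (X ≅ Y) → X ∈ ge → Y ∈ ge
  le_retract : ∀ X Y : C, IsRetractOf X Y → Y ∈ le → X ∈ le
  ge_retract : ∀ X Y : C, IsRetractOf X Y → Y ∈ ge → X ∈ ge
  le_shift : ∀ X ∈ le, X⟦(1 : ℤ)⟧ ∈ le
  ge_shift : ∀ X ∈ ge, X⟦(-1 : ℤ)⟧ ∈ ge
  orth : ∀ X : C, X⟦(1 : ℤ)⟧ ∈ ge → ∀ Y ∈ le, ∀ f : X ⟶ Y, f = 0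
  decomp : ∀ X ∈ CC, ∃ (A B : C) (f : A ⟶ X) (g : X ⟶ B) (h : B ⟶ A⟦(1 : ℤ)⟧),
    Triangle.mk f g h ∈ (distTriang C) ∧ A⟦(1 : ℤ)⟧ ∈ ge ∧ B ∈ le

namespace WeightStructureOn

variable {CC : Set C} (w : WeightStructureOn CC)

/-- `C_{w>0}`. -/
def gt : Set C := {X | X⟦(1 : ℤ)⟧ ∈ w.ge}

/-- `C_{w<0}`. -/
def lt : Set C := {X | X⟦(-1 : ℤ)⟧ ∈ w.le}

end WeightStructureOn

end Paper

/-!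
Perpendiculars are closed under extensions and retracts, and the t-structure identifies
`D^{t≤-1}` and `D^{t≥1}` with the right perpendiculars of `{P⟦m⟧ : m ≤ 0}` and `{P⟦m⟧ : m ≥ 0}`.
This gives the last two equalities and the inclusions `⊆` of the first two.

For `⊇`, an object `X` of `thick(S)` is a retract of an iterated extension `Z` of shifts of
objects of `S`, and `Z` has a weight decomposition `A ⟶ Z ⟶ B ⟶ A⟦1⟧` with
`A ∈ ext{P⟦m⟧ : m ≤ 0}` and `B ∈ D^{t≤-1}`, or dually with `A ⊥ D^{t≤0}` and
`B ∈ ext{P⟦m⟧ : m ≥ 0}`. Vanishing of `X ⟶ B` (resp. of `A ⟶ X`, as `X ∈ D^{t≤0}`) makes `X` a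
retract of `A` (resp. of `B`).

The decompositions are built by induction on extensions. Without the octahedral axiom the cone
of the comparison map is not shown to be an extension, only to be right perpendicular to the test
objects `W`, by the four lemma for `Hom(W, -)`; the dual decomposition is the same construction
in `Cᵒᵖ`.
-/

open CategoryTheory.Triangulated Pretriangulated.Opposite ZeroObject

namespace Paper

lemma forall_eq_zero_congr {α β : Type*} [Zero α] [Zero β] (e : α ≃ β) :
    (∀ a : α, a = 0) ↔ ∀ b : β, b = 0 := by
  simp only [← subsingleton_iff_forall_eq]
  exact e.subsingleton_congr

section Category

variable {C : Type*} [Category C]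

lemma isRetractOf_iff_nonempty_retract {X Y : C} : IsRetractOf X Y ↔ Nonempty (Retract X Y) :=
  ⟨fun ⟨i, r, h⟩ => ⟨⟨i, r, h⟩⟩, fun ⟨h⟩ => ⟨h.i, h.r, h.retract⟩⟩

lemma isRetractOf_refl (X : C) : IsRetractOf X X :=
  isRetractOf_iff_nonempty_retract.2 ⟨Retract.refl X⟩

lemma IsRetractOf.trans {X Y Z : C} (h : IsRetractOf X Y) (h' : IsRetractOf Y Z) :
    IsRetractOf X Z := by
  rw [isRetractOf_iff_nonempty_retract] at *
  exact ⟨h.some.trans h'.some⟩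

lemma IsRetractOf.map {D : Type*} [Category D] {X Y : C} (h : IsRetractOf X Y) (F : C ⥤ D) :
    IsRetractOf (F.obj X) (F.obj Y) := by
  rw [isRetractOf_iff_nonempty_retract] at *
  exact ⟨h.some.map F⟩

lemma op_mem_rPerp_iff [Preadditive C] {X : C} {T : Set C} :
    Opposite.op X ∈ rPerp {Y : Cᵒᵖ | Opposite.unop Y ∈ T} ↔ X ∈ lPerp T :=
  ⟨fun h Y hY f => Quiver.Hom.op_inj (h (Opposite.op Y) hY f.op),
    fun h _ hY f => Quiver.Hom.unop_inj (h _ hY f.unop)⟩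

variable [HasShift C ℤ]

def shifts (S : Set C) (p : ℤ → Prop) : Set C :=
  {X | ∃ P ∈ S, ∃ m : ℤ, p m ∧ Nonempty (X ≅ P⟦m⟧)}

lemma shift_mem_shifts {S : Set C} {X : C} (hX : X ∈ shifts S fun _ => True) (n : ℤ) :
    X⟦n⟧ ∈ shifts S fun _ => True := by
  obtain ⟨P, hP, m, -, ⟨e⟩⟩ := hX
  exact ⟨P, hP, m + n, trivial,
    ⟨(shiftFunctor C n).mapIso e ≪≫ (shiftFunctorAdd' C m n (m + n) rfl).symm.app P⟩⟩

variable [Preadditive C]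

lemma forall_eq_zero_shift_iff (P Y : C) {j n m : ℤ} (h : j + n + m = 0) :
    (∀ f : P⟦j⟧ ⟶ Y, f = 0) ↔ ∀ f : P ⟶ (Y⟦n⟧)⟦m⟧, f = 0 :=
  forall_eq_zero_congr <|
    ((shiftEquiv' C j (-j) (add_neg_cancel j)).toAdjunction.homEquiv P Y).trans
    (Iso.homCongr (Iso.refl P) ((shiftFunctorAdd' C n m (-j) (by omega)).app Y))

lemma mem_rPerp_shifts_iff {S : Set C} {p : ℤ → Prop} {Y : C} :
    Y ∈ rPerp (shifts S p) ↔ ∀ P ∈ S, ∀ j, p j → ∀ f : P⟦j⟧ ⟶ Y, f = 0 :=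
  ⟨fun h P hP j hj => h _ ⟨P, hP, j, hj, ⟨Iso.refl _⟩⟩,
    fun h _ ⟨P, hP, j, hj, ⟨e⟩⟩ => (forall_eq_zero_congr (e.homCongr (Iso.refl Y))).2 (h P hP j hj)⟩

lemma forall_shift_eq_zero_iff_mem_rPerp {S : Set C} {p q : ℤ → Prop} {n : ℤ}
    (hpq : ∀ j m, j + n + m = 0 → (p j ↔ q m)) (Y : C) :
    (∀ P ∈ S, ∀ m, q m → ∀ f : P ⟶ (Y⟦n⟧)⟦m⟧, f = 0) ↔ Y ∈ rPerp (shifts S p) := by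
  rw [mem_rPerp_shifts_iff]
  refine forall₂_congr fun P _ => ⟨fun h j hj => ?_, fun h m hm => ?_⟩
  · exact (forall_eq_zero_shift_iff P Y (m := -j - n) (by omega)).2
      (h _ ((hpq j _ (by omega)).1 hj))
  · exact (forall_eq_zero_shift_iff P Y (j := -n - m) (by omega)).1
      (h _ ((hpq _ m (by omega)).2 hm))

lemma forall_op_hom_shift_eq_zero {X Y : C} (h : ∀ u : X ⟶ Y⟦(1 : ℤ)⟧, u = 0) :
    ∀ u : Opposite.op Y ⟶ (Opposite.op X)⟦(1 : ℤ)⟧, u = 0 :=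
  (forall_eq_zero_congr <|
    ((shiftEquiv' C (-1) 1 (by norm_num)).toAdjunction.homEquiv X Y).symm.trans <|
    (opEquiv (Opposite.op Y) (Opposite.op (X⟦(-1 : ℤ)⟧))).symm.trans <|
      Iso.homCongr (Iso.refl _) ((shiftFunctorOpIso C 1 (-1) (by norm_num)).app _).symm).1 h

end Category

section Pretriangulated

variable {C : Type*} [Category C] [Preadditive C] [HasZeroObject C] [HasShift C ℤ]
  [∀ n : ℤ, (shiftFunctor C n).Additive] [Pretriangulated C]

def IsExtension (A E B : C) : Prop :=
  ∃ (f : A ⟶ E) (g : E ⟶ B) (h : B ⟶ A⟦(1 : ℤ)⟧), Triangle.mk f g h ∈ distTriang C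

lemma isExtension_self_zero (X : C) : IsExtension X X 0 :=
  ⟨_, _, _, contractible_distinguished X⟩

lemma isExtension_zero_self (X : C) : IsExtension 0 X X :=
  ⟨_, _, _, contractible_distinguished₁ X⟩

lemma IsExtension.op {A E B : C} (h : IsExtension A E B) :
    IsExtension (Opposite.op B) (Opposite.op E) (Opposite.op A) := by
  obtain ⟨f, g, h, hT⟩ := h
  exact ⟨_, _, _, op_distinguished _ hT⟩

lemma IsExtension.unop {A E B : Cᵒᵖ} (h : IsExtension A E B) :
    IsExtension (Opposite.unop B) (Opposite.unop E) (Opposite.unop A) := by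
  obtain ⟨f, g, h, hT⟩ := h
  exact ⟨_, _, _, unop_distinguished _ hT⟩

structure IsExtRetractClosed (P : Set C) : Prop where
  zero : ∀ X : C, IsZero X → X ∈ P
  ext : ∀ {A E B : C}, IsExtension A E B → A ∈ P → B ∈ P → E ∈ P
  retract : ∀ {X Y : C}, IsRetractOf X Y → Y ∈ P → X ∈ P

namespace IsExtRetractClosed

variable {P : Set C}

lemma extClos_subset (hP : IsExtRetractClosed P) {G : Set C} (hG : G ⊆ P) :
    {X | ExtClos G X} ⊆ P := by
  intro X hX
  induction hX with
  | of h => exact hG h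
  | zero h => exact hP.zero _ h
  | ext f g h hT _ _ ihA ihB => exact hP.ext ⟨f, g, h, hT⟩ ihA ihB

lemma karClos_extClos_subset (hP : IsExtRetractClosed P) {G : Set C} (hG : G ⊆ P) :
    KarClos {X | ExtClos G X} ⊆ P := by
  rintro X ⟨Y, hY, hXY⟩
  exact hP.retract hXY (hP.extClos_subset hG hY)

end IsExtRetractClosed

lemma isExtRetractClosed_lPerp (T : Set C) : IsExtRetractClosed (lPerp T) where
  zero X hX Y _ u := hX.eq_of_src u 0
  ext := by
    rintro A E B ⟨f, g, h, hT⟩ hA hB Y hY u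
    obtain ⟨v, rfl⟩ : ∃ v : B ⟶ Y, u = g ≫ v := Triangle.yoneda_exact₂ _ hT u (hA Y hY _)
    rw [hB Y hY v, comp_zero]
  retract := by
    rintro X X' ⟨i, r, hir⟩ hX' Y hY u
    rw [← Category.id_comp u, ← hir, Category.assoc, hX' Y hY (r ≫ u), comp_zero]

lemma isExtRetractClosed_rPerp (T : Set C) : IsExtRetractClosed (rPerp T) where
  zero Y hY X _ u := hY.eq_of_tgt u 0
  ext := by
    rintro A E B ⟨f, g, h, hT⟩ hA hB X hX u
    obtain ⟨v, rfl⟩ : ∃ v : X ⟶ A, u = v ≫ f := Triangle.coyoneda_exact₂ _ hT u (hB X hX _)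
    rw [hA X hX v, zero_comp]
  retract := by
    rintro Y Y' ⟨i, r, hir⟩ hY' X hX u
    rw [← Category.comp_id u, ← hir, ← Category.assoc, hY' X hX (u ≫ i), zero_comp]

lemma isExtRetractClosed_thickClos (S : Set C) : IsExtRetractClosed {X | ThickClos S X} where
  zero _ := ThickClos.zero
  ext := by
    rintro A E B ⟨f, g, h, hT⟩
    exact ThickClos.ext f g h hT
  retract := ThickClos.retract

lemma rPerp_karClos_extClos (G : Set C) : rPerp (KarClos {X | ExtClos G X}) = rPerp G := by
  refine subset_antisymm (fun Y hY X hX => hY X ⟨X, ExtClos.of hX, isRetractOf_refl X⟩)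
    fun Y hY X hX => ?_
  exact (isExtRetractClosed_lPerp {Y}).karClos_extClos_subset (fun Z hZ _ hY' => hY' ▸ hY Z hZ)
    hX Y rfl

lemma IsRetractOf.of_isExtension_left {X Z A B : C} (hXZ : IsRetractOf X Z)
    (hZ : IsExtension A Z B) (hXB : ∀ u : X ⟶ B, u = 0) : IsRetractOf X A := by
  obtain ⟨i, r, hir⟩ := hXZ
  obtain ⟨f, g, h, hT⟩ := hZ
  obtain ⟨s, hs⟩ : ∃ s : X ⟶ A, i = s ≫ f := Triangle.coyoneda_exact₂ _ hT i (hXB _)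
  exact ⟨s, f ≫ r, by rw [← Category.assoc, ← hs, hir]⟩

lemma IsRetractOf.of_isExtension_right {X Z A B : C} (hXZ : IsRetractOf X Z)
    (hZ : IsExtension A Z B) (hAX : ∀ u : A ⟶ X, u = 0) : IsRetractOf X B := by
  obtain ⟨i, r, hir⟩ := hXZ
  obtain ⟨f, g, h, hT⟩ := hZ
  obtain ⟨s, hs⟩ : ∃ s : B ⟶ X, r = g ≫ s := Triangle.yoneda_exact₂ _ hT r (hAX _)
  exact ⟨i ≫ g, s, by rw [Category.assoc, ← hs, hir]⟩

section FourLemma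

variable {T₁ T₂ : Triangle C} (φ : T₁ ⟶ T₂) {W : C}

lemma exists_eq_comp_hom₂ (hT₁ : T₁ ∈ distTriang C) (hT₂ : T₂ ∈ distTriang C)
    (h₁ : ∀ y : W ⟶ T₂.obj₁, ∃ x, y = x ≫ φ.hom₁) (h₃ : ∀ y : W ⟶ T₂.obj₃, ∃ x, y = x ≫ φ.hom₃)
    (h₄ : ∀ x : W ⟶ T₁.obj₁⟦(1 : ℤ)⟧, x ≫ φ.hom₁⟦(1 : ℤ)⟧' = 0 → x = 0)
    (y : W ⟶ T₂.obj₂) : ∃ x, y = x ≫ φ.hom₂ := by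
  obtain ⟨c, hc⟩ := h₃ (y ≫ T₂.mor₂)
  obtain ⟨z, rfl⟩ := Triangle.coyoneda_exact₃ _ hT₁ c (h₄ _ (by
    rw [Category.assoc, φ.comm₃, ← Category.assoc, ← hc, Category.assoc,
      comp_distTriang_mor_zero₂₃ _ hT₂, comp_zero]))
  obtain ⟨a, ha⟩ := Triangle.coyoneda_exact₂ _ hT₂ (y - z ≫ φ.hom₂) (by
    rw [Preadditive.sub_comp, Category.assoc, ← φ.comm₂, ← Category.assoc, ← hc, sub_self])
  obtain ⟨a', rfl⟩ := h₁ a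
  exact ⟨a' ≫ T₁.mor₁ + z, by
    rw [Preadditive.add_comp, Category.assoc, φ.comm₁, ← Category.assoc, ← ha, sub_add_cancel]⟩

lemma eq_zero_of_comp_hom₃_eq_zero (hT₁ : T₁ ∈ distTriang C) (hT₂ : T₂ ∈ distTriang C)
    (h₁ : ∀ y : W ⟶ T₂.obj₁, ∃ x, y = x ≫ φ.hom₁) (h₂ : ∀ x : W ⟶ T₁.obj₂, x ≫ φ.hom₂ = 0 → x = 0)
    (h₄ : ∀ x : W ⟶ T₁.obj₁⟦(1 : ℤ)⟧, x ≫ φ.hom₁⟦(1 : ℤ)⟧' = 0 → x = 0)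
    (x : W ⟶ T₁.obj₃) (hx : x ≫ φ.hom₃ = 0) : x = 0 := by
  obtain ⟨y, rfl⟩ := Triangle.coyoneda_exact₃ _ hT₁ x (h₄ _ (by
    rw [Category.assoc, φ.comm₃, ← Category.assoc, hx, zero_comp]))
  obtain ⟨z, hz⟩ := Triangle.coyoneda_exact₂ _ hT₂ (y ≫ φ.hom₂) (by
    rw [Category.assoc, ← φ.comm₂, ← Category.assoc, hx])
  obtain ⟨z', rfl⟩ := h₁ z
  have hy : y = z' ≫ T₁.mor₁ := sub_eq_zero.1 (h₂ _ (by
    rw [Preadditive.sub_comp, hz, Category.assoc, Category.assoc, φ.comm₁, sub_self]))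
  rw [hy, Category.assoc, comp_distTriang_mor_zero₁₂ _ hT₁, comp_zero]

end FourLemma

lemma exists_eq_comp_mor₁ {T : Triangle C} (hT : T ∈ distTriang C) {W : C}
    (h : ∀ u : W ⟶ T.obj₃, u = 0) (y : W ⟶ T.obj₂) : ∃ x, y = x ≫ T.mor₁ :=
  Triangle.coyoneda_exact₂ _ hT y (h _)

lemma eq_zero_of_comp_mor₁_shift_eq_zero {T : Triangle C} (hT : T ∈ distTriang C) {W : C}
    (h : ∀ u : W ⟶ T.obj₃, u = 0) (x : W ⟶ T.obj₁⟦(1 : ℤ)⟧) (hx : x ≫ T.mor₁⟦(1 : ℤ)⟧' = 0) :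
    x = 0 := by
  obtain ⟨u, rfl⟩ := Triangle.coyoneda_exact₁ _ hT x hx
  rw [h u, zero_comp]

lemma eq_zero_of_distTriang {T : Triangle C} (hT : T ∈ distTriang C) {W : C}
    (h₁ : ∀ y : W ⟶ T.obj₂, ∃ x, y = x ≫ T.mor₁)
    (h₂ : ∀ x : W ⟶ T.obj₁⟦(1 : ℤ)⟧, x ≫ T.mor₁⟦(1 : ℤ)⟧' = 0 → x = 0) (x : W ⟶ T.obj₃) :
    x = 0 := by
  obtain ⟨e, rfl⟩ := Triangle.coyoneda_exact₃ _ hT x (h₂ _ (by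
    rw [Category.assoc, comp_distTriang_mor_zero₃₁ _ hT, comp_zero]))
  obtain ⟨e', rfl⟩ := h₁ e
  rw [Category.assoc, comp_distTriang_mor_zero₁₂ _ hT, comp_zero]

lemma IsExtension.exists_cone_mem_rPerp {A E B A₁ A₂ B₁ B₂ : C} {T : Set C}
    (hE : IsExtension A E B) (hA : IsExtension A₁ A A₂) (hB : IsExtension B₁ B B₂)
    (hBA : ∀ u : B₁ ⟶ A₂⟦(1 : ℤ)⟧, u = 0) (hA₂ : A₂ ∈ rPerp T) (hB₂ : B₂ ∈ rPerp T) :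
    ∃ E₁ E₂, IsExtension A₁ E₁ B₁ ∧ IsExtension E₁ E E₂ ∧ E₂ ∈ rPerp T := by
  obtain ⟨f, g, h, hT⟩ := hE
  obtain ⟨p, q, r, hTA⟩ := hA
  obtain ⟨i, j, k, hTB⟩ := hB
  obtain ⟨φ, hφ⟩ : ∃ φ : B₁ ⟶ A₁⟦(1 : ℤ)⟧, φ ≫ p⟦(1 : ℤ)⟧' = i ≫ h := by
    obtain ⟨φ, hφ⟩ : ∃ φ : B₁ ⟶ A₁⟦(1 : ℤ)⟧, i ≫ h = φ ≫ (-p⟦(1 : ℤ)⟧') :=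
      Triangle.coyoneda_exact₁ _ (rot_of_distTriang _ hTA) (i ≫ h) (hBA _)
    exact ⟨-φ, by rw [hφ, Preadditive.neg_comp, Preadditive.comp_neg]⟩
  obtain ⟨E₁, α, β, hT₁⟩ := distinguished_cocone_triangle₂ φ
  obtain ⟨ψ, hψ₁, hψ₂⟩ := complete_distinguished_triangle_morphism₂ _ _ hT₁ hT p i hφ
  obtain ⟨E₂, π, ρ, hT₂⟩ := distinguished_cocone_triangle ψ
  refine ⟨E₁, E₂, ⟨α, β, φ, hT₁⟩, ⟨ψ, π, ρ, hT₂⟩, fun W hW x => ?_⟩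
  let Ψ : Triangle.mk α β φ ⟶ Triangle.mk f g h := Triangle.homMk _ _ p ψ i hψ₁ hψ₂ hφ
  have hp := exists_eq_comp_mor₁ hTA (hA₂ W hW)
  have hi := exists_eq_comp_mor₁ hTB (hB₂ W hW)
  have hp' := eq_zero_of_comp_mor₁_shift_eq_zero hTA (hA₂ W hW)
  have hi' := eq_zero_of_comp_mor₁_shift_eq_zero hTB (hB₂ W hW)
  -- `Hom(W, -)` of `Ψ` is onto at `E` and injective at `E₁⟦1⟧`, hence kills the cone of `ψ`
  exact eq_zero_of_distTriang hT₂ (exists_eq_comp_hom₂ Ψ hT₁ hT hp hi hp')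
    (eq_zero_of_comp_hom₃_eq_zero ((rotate C).map ((rotate C).map Ψ))
      (rot_of_distTriang _ (rot_of_distTriang _ hT₁)) (rot_of_distTriang _ (rot_of_distTriang _ hT))
      hi hp' hi') x

lemma IsExtension.exists_fiber_mem_lPerp {A E B A₁ A₂ B₁ B₂ : C} {T : Set C}
    (hE : IsExtension A E B) (hA : IsExtension A₁ A A₂) (hB : IsExtension B₁ B B₂)
    (hBA : ∀ u : B₁ ⟶ A₂⟦(1 : ℤ)⟧, u = 0) (hA₁ : A₁ ∈ lPerp T) (hB₁ : B₁ ∈ lPerp T) :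
    ∃ E₁ E₂, IsExtension A₂ E₂ B₂ ∧ IsExtension E₁ E E₂ ∧ E₁ ∈ lPerp T := by
  obtain ⟨E₁, E₂, h₁, h₂, h₃⟩ := hE.op.exists_cone_mem_rPerp hB.op hA.op
    (forall_op_hom_shift_eq_zero hBA) (op_mem_rPerp_iff.2 hB₁) (op_mem_rPerp_iff.2 hA₁)
  exact ⟨_, _, h₁.unop, h₂.unop, op_mem_rPerp_iff.1 h₃⟩

lemma exists_isExtension_extClos_rPerp {G L T : Set C} (hG : ∀ X ∈ G, X ∈ L ∨ X ∈ rPerp T)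
    (hLT : ∀ A B, ExtClos L A → B ∈ rPerp T → ∀ u : A ⟶ B⟦(1 : ℤ)⟧, u = 0)
    {X : C} (hX : ExtClos G X) : ∃ A B, IsExtension A X B ∧ ExtClos L A ∧ B ∈ rPerp T := by
  induction hX with
  | @of X h =>
    rcases hG X h with hL | hT
    · exact ⟨X, 0, isExtension_self_zero X, ExtClos.of hL,
        (isExtRetractClosed_rPerp T).zero _ (isZero_zero C)⟩
    · exact ⟨0, X, isExtension_zero_self X, ExtClos.zero (isZero_zero C), hT⟩
  | @zero X h => exact ⟨X, 0, isExtension_self_zero X, ExtClos.zero h,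
      (isExtRetractClosed_rPerp T).zero _ (isZero_zero C)⟩
  | ext f g h hT _ _ ihA ihB =>
    obtain ⟨A₁, A₂, hA, hA₁, hA₂⟩ := ihA
    obtain ⟨B₁, B₂, hB, hB₁, hB₂⟩ := ihB
    obtain ⟨E₁, E₂, ⟨α, β, γ, hE₁⟩, hE, hE₂⟩ :=
      IsExtension.exists_cone_mem_rPerp ⟨f, g, h, hT⟩ hA hB (hLT _ _ hB₁ hA₂) hA₂ hB₂
    exact ⟨E₁, E₂, hE, ExtClos.ext α β γ hE₁ hA₁ hB₁, hE₂⟩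

lemma exists_isExtension_lPerp_extClos {G R T : Set C} (hG : ∀ X ∈ G, X ∈ lPerp T ∨ X ∈ R)
    (hRT : ∀ A B, A ∈ lPerp T → ExtClos R B → ∀ u : A ⟶ B⟦(1 : ℤ)⟧, u = 0)
    {X : C} (hX : ExtClos G X) : ∃ A B, IsExtension A X B ∧ A ∈ lPerp T ∧ ExtClos R B := by
  induction hX with
  | @of X h =>
    rcases hG X h with hT | hR
    · exact ⟨X, 0, isExtension_self_zero X, hT, ExtClos.zero (isZero_zero C)⟩
    · exact ⟨0, X, isExtension_zero_self X, (isExtRetractClosed_lPerp T).zero _ (isZero_zero C),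
        ExtClos.of hR⟩
  | @zero X h => exact ⟨X, 0, isExtension_self_zero X, (isExtRetractClosed_lPerp T).zero _ h,
      ExtClos.zero (isZero_zero C)⟩
  | ext f g h hT _ _ ihA ihB =>
    obtain ⟨A₁, A₂, hA, hA₁, hA₂⟩ := ihA
    obtain ⟨B₁, B₂, hB, hB₁, hB₂⟩ := ihB
    obtain ⟨E₁, E₂, ⟨α, β, γ, hE₂⟩, hE, hE₁⟩ :=
      IsExtension.exists_fiber_mem_lPerp ⟨f, g, h, hT⟩ hA hB (hRT _ _ hB₁ hA₂) hA₁ hB₁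
    exact ⟨E₁, E₂, hE, hE₁, ExtClos.ext α β γ hE₂ hA₂ hB₂⟩

lemma extClos_shift {G : Set C} (hG : ∀ X ∈ G, ∀ n : ℤ, X⟦n⟧ ∈ G) {X : C} (hX : ExtClos G X)
    (n : ℤ) : ExtClos G (X⟦n⟧) := by
  induction hX with
  | of h => exact ExtClos.of (hG _ h n)
  | zero h => exact ExtClos.zero ((shiftFunctor C n).map_isZero h)
  | ext f g h hT _ _ ihA ihB =>
    exact ExtClos.ext _ _ _ (Triangle.shift_distinguished _ hT n) ihA ihB

lemma mem_karClos_extClos_of_thickClos {S : Set C} {X : C} (hX : ThickClos S X) :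
    X ∈ KarClos {Z | ExtClos (shifts S fun _ => True) Z} := by
  induction hX with
  | of h =>
    exact ⟨_, ExtClos.of ⟨_, h, 0, trivial, ⟨((shiftFunctorZero C ℤ).app _).symm⟩⟩,
      isRetractOf_refl _⟩
  | zero h => exact ⟨_, ExtClos.zero h, isRetractOf_refl _⟩
  | shift n _ ih =>
    obtain ⟨Z, hZ, hXZ⟩ := ih
    exact ⟨Z⟦n⟧, extClos_shift (fun Y hY => shift_mem_shifts hY) hZ n, hXZ.map _⟩
  | ext f g h hT _ _ ihA ihB =>
    obtain ⟨Y₁, hY₁, hr₁⟩ := ihA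
    obtain ⟨Y₂, hY₂, hr₂⟩ := ihB
    obtain ⟨Z, ⟨_, _, f', g', h', hT', hA, hB⟩, hr⟩ :=
      ObjectProperty.extensionProduct_retractClosure_retractClosure_le _ _ _
        ⟨_, _, f, g, h, hT, ⟨Y₁, hY₁, isRetractOf_iff_nonempty_retract.1 hr₁⟩,
          ⟨Y₂, hY₂, isRetractOf_iff_nonempty_retract.1 hr₂⟩⟩
    exact ⟨Z, ExtClos.ext f' g' h' hT' hA hB, isRetractOf_iff_nonempty_retract.2 hr⟩
  | retract hXY _ ih =>
    obtain ⟨Z, hZ, hYZ⟩ := ih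
    exact ⟨Z, hZ, hXY.trans hYZ⟩

section Silting

variable {S : Set C} {t : TStructure C}

lemma le_iff_mem_rPerp (hS : IsSiltingTStructureFor S t) {n a : ℤ} (h : n + a + 1 = 0) (Y : C) :
    t.le n Y ↔ Y ∈ rPerp (shifts S (· ≤ a)) := by
  rw [← t.shift_le n 0 n (add_zero n), ObjectProperty.prop_shift_iff, hS.1]
  exact forall_shift_eq_zero_iff_mem_rPerp (fun j m hjm => by omega) Y

lemma ge_iff_mem_rPerp (hS : IsSiltingTStructureFor S t) {n a : ℤ} (h : n + a = 1) (Y : C) :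
    t.ge n Y ↔ Y ∈ rPerp (shifts S (a ≤ ·)) := by
  rw [← t.shift_ge n 0 n (add_zero n), ObjectProperty.prop_shift_iff, hS.2]
  exact forall_shift_eq_zero_iff_mem_rPerp (fun j m hjm => by omega) Y

lemma le_zero_of_mem_lPerp (hS : IsSiltingTStructureFor S t) {X : C}
    (hX : X ∈ lPerp {Y | t.ge 1 Y}) : t.le 0 X := by
  obtain ⟨A, B, hA, hB, f, g, h, hT⟩ := t.exists_triangle X 0 1 rfl
  have hXA := (isRetractOf_refl X).of_isExtension_left ⟨f, g, h, hT⟩ (hX B hB)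
  rw [le_iff_mem_rPerp hS (a := -1) (by norm_num)] at hA ⊢
  exact (isExtRetractClosed_rPerp _).retract hXA hA

lemma le_zero_of_mem (hS : IsSiltingTStructureFor S t) {P : C} (hP : P ∈ S) : t.le 0 P :=
  le_zero_of_mem_lPerp hS fun Y hY => (ge_iff_mem_rPerp hS (a := 0) (by norm_num) Y).1 hY P
    ⟨P, hP, 0, le_rfl, ⟨((shiftFunctorZero C ℤ).app P).symm⟩⟩

lemma le_of_mem_shifts (hS : IsSiltingTStructureFor S t) {X : C} {b n : ℤ} (hbn : 0 ≤ b + n)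
    (hX : X ∈ shifts S (b ≤ ·)) : t.le n X := by
  obtain ⟨P, hP, m, hm, ⟨e⟩⟩ := hX
  exact (t.le n).prop_of_iso e.symm
    (t.le_monotone (by omega) _ (t.le_shift 0 m (-m) (by omega) P (le_zero_of_mem hS hP)))

lemma le_shift_one {n : ℤ} {X : C} (hX : t.le n X) : t.le n (X⟦(1 : ℤ)⟧) :=
  t.le_monotone (by omega) _ (t.le_shift n 1 (n - 1) (by omega) X hX)

lemma exists_isExtension_le (hS : IsSiltingTStructureFor S t) {Z : C}
    (hZ : ExtClos (shifts S fun _ => True) Z) :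
    ∃ A B, IsExtension A Z B ∧ ExtClos (shifts S (· ≤ 0)) A ∧ t.le (-1) B := by
  have hle := le_iff_mem_rPerp hS (n := -1) (a := 0) (by norm_num)
  simp only [hle]
  refine exists_isExtension_extClos_rPerp ?_ (fun A B hA hB u => ?_) hZ
  · rintro X ⟨P, hP, m, -, e⟩
    by_cases hm : m ≤ 0
    · exact Or.inl ⟨P, hP, m, hm, e⟩
    · exact Or.inr ((hle X).1 (le_of_mem_shifts hS (b := 1) le_rfl ⟨P, hP, m, by omega, e⟩))
  · exact (isExtRetractClosed_lPerp (rPerp _)).extClos_subset (fun X hX Y hY => hY X hX) hA _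
      ((hle _).1 (le_shift_one ((hle B).2 hB))) u

lemma exists_isExtension_ge (hS : IsSiltingTStructureFor S t) {Z : C}
    (hZ : ExtClos (shifts S fun _ => True) Z) :
    ∃ A B, IsExtension A Z B ∧ A ∈ lPerp {Y | t.le 0 Y} ∧ ExtClos (shifts S (0 ≤ ·)) B := by
  have hle := le_iff_mem_rPerp hS (n := 0) (a := -1) (by norm_num)
  have hR : {X | ExtClos (shifts S (0 ≤ ·)) X} ⊆ {Y | t.le 0 Y} := fun X hX =>
    (hle X).2 ((isExtRetractClosed_rPerp _).extClos_subset
      (fun X hX => (hle X).1 (le_of_mem_shifts hS le_rfl hX)) hX)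
  refine exists_isExtension_lPerp_extClos ?_ (fun A B hA hB u => hA _ (le_shift_one (hR hB)) u) hZ
  rintro X ⟨P, hP, m, -, e⟩
  by_cases hm : 0 ≤ m
  · exact Or.inr ⟨P, hP, m, hm, e⟩
  · exact Or.inl fun Y hY => (hle Y).1 hY X ⟨P, hP, m, by omega, e⟩

lemma karClos_extClos_shifts_subset (p : ℤ → Prop) :
    KarClos {X | ExtClos (shifts S p) X} ⊆ lPerp (rPerp (shifts S p)) ∩ {X | ThickClos S X} :=
  Set.subset_inter ((isExtRetractClosed_lPerp _).karClos_extClos_subset fun X hX _ hY => hY X hX)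
    ((isExtRetractClosed_thickClos S).karClos_extClos_subset fun _ ⟨_, hP, m, _, ⟨e⟩⟩ =>
      ThickClos.retract ⟨e.hom, e.inv, e.hom_inv_id⟩ (ThickClos.shift m (ThickClos.of hP)))

lemma karClos_extClos_le_eq (hS : IsSiltingTStructureFor S t) :
    KarClos {X | ExtClos (shifts S (· ≤ 0)) X} = lPerp {Y | t.le (-1) Y} ∩ {X | ThickClos S X} := by
  have hle : {Y | t.le (-1) Y} = rPerp (shifts S (· ≤ 0)) :=
    Set.ext (le_iff_mem_rPerp hS (by norm_num))
  refine subset_antisymm (hle ▸ karClos_extClos_shifts_subset _) ?_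
  rintro X ⟨hX, hXS⟩
  obtain ⟨Z, hZ, hXZ⟩ := mem_karClos_extClos_of_thickClos hXS
  obtain ⟨A, B, hAZB, hA, hB⟩ := exists_isExtension_le hS hZ
  exact ⟨A, hA, hXZ.of_isExtension_left hAZB (hX B hB)⟩

lemma karClos_extClos_ge_eq (hS : IsSiltingTStructureFor S t) :
    KarClos {X | ExtClos (shifts S (0 ≤ ·)) X} = lPerp {Y | t.ge 1 Y} ∩ {X | ThickClos S X} := by
  have hge : {Y | t.ge 1 Y} = rPerp (shifts S (0 ≤ ·)) :=
    Set.ext (ge_iff_mem_rPerp hS (by norm_num))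
  refine subset_antisymm (hge ▸ karClos_extClos_shifts_subset _) ?_
  rintro X ⟨hX, hXS⟩
  obtain ⟨Z, hZ, hXZ⟩ := mem_karClos_extClos_of_thickClos hXS
  obtain ⟨A, B, hAZB, hA, hB⟩ := exists_isExtension_ge hS hZ
  exact ⟨B, hB, hXZ.of_isExtension_right hAZB (hA X (le_zero_of_mem_lPerp hS hX))⟩

end Silting

end Pretriangulated

universe v u

variable {C : Type u} [Category.{v} C] [Preadditive C] [HasZeroObject C]
  [HasShift C ℤ] [∀ n : ℤ, (shiftFunctor C n).Additive] [Pretriangulated C]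

/-- the weight structure induced by a silting collection on
`thick(S)` is w-t-strictly left orthogonal to the associated silting t-structure. -/
theorem silting_wt_strict_orthogonal [HasFiniteBiproducts C]
    (S : Set C) (t : TStructure C) (hS : IsSiltingCollection S t) :
    KarClos {X | ExtClos {X : C | ∃ P ∈ S, ∃ m : ℤ, m ≤ 0 ∧ Nonempty (X ≅ P⟦m⟧)} X} =
        lPerp {Y : C | t.le (-1) Y} ∩ {X | ThickClos S X} ∧
    KarClos {X | ExtClos {X : C | ∃ P ∈ S, ∃ m : ℤ, 0 ≤ m ∧ Nonempty (X ≅ P⟦m⟧)} X} =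
        lPerp {Y : C | t.ge 1 Y} ∩ {X | ThickClos S X} ∧
    {Y : C | t.le (-1) Y} =
      rPerp (KarClos {X | ExtClos {X : C | ∃ P ∈ S, ∃ m : ℤ, m ≤ 0 ∧ Nonempty (X ≅ P⟦m⟧)} X}) ∧
    {Y : C | t.ge 1 Y} =
      rPerp (KarClos {X | ExtClos {X : C | ∃ P ∈ S, ∃ m : ℤ, 0 ≤ m ∧ Nonempty (X ≅ P⟦m⟧)} X}) := by
  refine ⟨karClos_extClos_le_eq hS.tstr, karClos_extClos_ge_eq hS.tstr, ?_, ?_⟩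
  · rw [rPerp_karClos_extClos]
    exact Set.ext (le_iff_mem_rPerp hS.tstr (by norm_num))
  · rw [rPerp_karClos_extClos]
    exact Set.ext (ge_iff_mem_rPerp hS.tstr (by norm_num))

end Paper
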